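/- If (M,L) is a generalized recurrent Finsler manifold of dimension n ≥ 3 with recurrence forms A, B (∇^h R = A ⊗ R + B ⊗ G), then double contraction gives ∇^h r = r A + n(n−1) B, and consequently (M,L) is concircularly recurrent: ∇^h C = A ⊗ C. -/

import Mathlib

/- Abstract setting for the pullback approach to Finsler geometry.
   `F` plays the role of the ring of smooth functions on `TM`,
   `V` the module of π-vector fields.  The structure packages the data of a
   Finsler manifold `(M,L)` with its Cartan connection: the Finsler metric `g`,
   the h-curvature tensor `R`, the fundamental vector field `eta`, the
   horizontal Ricci tensor `Ric` (trace of `R`), the Ricci operator `Ric0`,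
   the horizontal scalar curvature `r`, and the h-covariant derivative
   operators `Dh0, Dh1, Dh2, Dh3` (on scalars, 1-forms, (0,2)-tensors and
   vector-valued (1,3)-tensors, the first argument of the result being the
   direction of differentiation) together with the second-derivative
   operators `Dh1b, Dh2b, Dh3b`.  `invN` and `invn` are the inverses of the
   functions `n(n-1)` and `n`.  The axioms record the standard facts used in
   the paper: Leibniz rules, metricity (∇ʰG = 0), trace compatibilities, and
   the consequences of horizontal integrability (R̂ = 0): the Bianchi
   identities, pair symmetry, symmetry of Ric, the Ricci identity and the
   vanishing lemma for 2-forms. -/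
structure FinslerRec (F : Type*) (V : Type*) [CommRing F] [AddCommGroup V] [Module F V] where
  n : ℕ
  g : V → V → F
  R : V → V → V → V
  eta : V
  Ric : V → V → F
  Ric0 : V → V
  r : F
  invN : F
  invn : F
  Dh0 : F → V → F
  Dh1 : (V → F) → V → V → F
  Dh1b : (V → V → F) → V → V → V → F
  Dh2 : (V → V → F) → V → V → V → F
  Dh2b : (V → V → V → F) → V → V → V → V → F
  Dh3 : (V → V → V → V) → V → V → V → V → V
  Dh3b : (V → V → V → V → V) → V → V → V → V → V → V
  tr13 : (V → V → V → V) → V → V → F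
  tr02 : (V → V → F) → F
  invN_mul : invN * ((n * (n - 1) : ℕ) : F) = 1
  invn_mul : invn * (n : F) = 1
  g_Ric0 : ∀ X Y, g (Ric0 X) Y = Ric X Y
  tr13_R : tr13 R = Ric
  tr13_G : ∀ X Y, tr13 (fun a b c => g a c • b - g b c • a) X Y = ((n : F) - 1) * g X Y
  tr13_add : ∀ T S X Y, tr13 (fun a b c => T a b c + S a b c) X Y = tr13 T X Y + tr13 S X Y
  tr13_smul : ∀ (f : F) T X Y, tr13 (fun a b c => f • T a b c) X Y = f * tr13 T X Y
  tr13_Dh : ∀ T X Y Z, tr13 (Dh3 T X) Y Z = Dh2 (tr13 T) X Y Z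
  tr02_Ric : tr02 Ric = r
  tr02_g : tr02 g = (n : F)
  tr02_add : ∀ ω σ, tr02 (fun a b => ω a b + σ a b) = tr02 ω + tr02 σ
  tr02_smul : ∀ (f : F) ω, tr02 (fun a b => f * ω a b) = f * tr02 ω
  tr02_Dh : ∀ ω X, tr02 (fun a b => Dh2 ω X a b) = Dh0 (tr02 ω) X
  DhG_eq_zero : ∀ X a b c, Dh3 (fun x y z => g x z • y - g y z • x) X a b c = 0
  Dh3_add : ∀ T S X a b c, Dh3 (fun x y z => T x y z + S x y z) X a b c
      = Dh3 T X a b c + Dh3 S X a b c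
  Dh3_smulF : ∀ (f : F) T X a b c, Dh3 (fun x y z => f • T x y z) X a b c
      = Dh0 f X • T a b c + f • Dh3 T X a b c
  Dh3b_add : ∀ P Q X Y a b c, Dh3b (fun x y z w => P x y z w + Q x y z w) X Y a b c
      = Dh3b P X Y a b c + Dh3b Q X Y a b c
  Dh3b_tens : ∀ (A : V → F) T X Y a b c, Dh3b (fun x y z w => A x • T y z w) X Y a b c
      = Dh1 A X Y • T a b c + A Y • Dh3 T X a b c
  Dh2b_add : ∀ P Q X Y a b, Dh2b (fun x y z => P x y z + Q x y z) X Y a b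
      = Dh2b P X Y a b + Dh2b Q X Y a b
  Dh2b_tens : ∀ (A : V → F) (ω : V → V → F) X Y a b, Dh2b (fun x y z => A x * ω y z) X Y a b
      = Dh1 A X Y * ω a b + A Y * Dh2 ω X a b
  bianchi1 : (∀ X Y, R X Y eta = 0) → ∀ X Y Z, R X Y Z + R Y Z X + R Z X Y = 0
  pair_sym : (∀ X Y, R X Y eta = 0) → ∀ X Y Z W, g (R X Y Z) W = g (R Z W X) Y
  bianchi2 : (∀ X Y, R X Y eta = 0) → ∀ X Y Z W,
      Dh3 R X Y Z W + Dh3 R Y Z X W + Dh3 R Z X Y W = 0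
  ric_symm : (∀ X Y, R X Y eta = 0) → ∀ X Y, Ric X Y = Ric Y X
  ricci_id1 : (∀ X Y, R X Y eta = 0) → ∀ (A : V → F) X Y Z,
      Dh1b (Dh1 A) Y X Z - Dh1b (Dh1 A) X Y Z = - A (R X Y Z)
  vanish_R : (∀ X Y, R X Y eta = 0) → ∀ ω : V → V → F,
      (∀ u v w x y z, ω u v * g (R w x y) z + ω w x * g (R y z u) v
        + ω y z * g (R u v w) x = 0) → ∀ X Y, ω X Y = 0
  vanish_G : (∀ X Y, R X Y eta = 0) → ∀ ω : V → V → F,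
      (∀ u v w x y z, ω u v * g (g w y • x - g x y • w) z
        + ω w x * g (g y u • z - g z u • y) v
        + ω y z * g (g u w • v - g v w • u) x = 0) → ∀ X Y, ω X Y = 0

namespace FinslerRec

variable {F : Type*} {V : Type*} [CommRing F] [AddCommGroup V] [Module F V] (S : FinslerRec F V)

/-- The tensor `G(X,Y)Z = g(X,Z)Y - g(Y,Z)X`. -/
def G : V → V → V → V := fun X Y Z => S.g X Z • Y - S.g Y Z • X

/-- The concircular curvature tensor `C = R - (r/(n(n-1))) G`. -/
def C : V → V → V → V := fun X Y Z => S.R X Y Z - (S.invN * S.r) • S.G X Y Z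

/-- The (0,4) curvature tensor `𝐑(X,Y,Z,W) = g(R(X,Y)Z, W)`. -/
def bR : V → V → V → V → F := fun X Y Z W => S.g (S.R X Y Z) W

/-- The (0,4) concircular tensor `𝐂(X,Y,Z,W) = g(C(X,Y)Z, W)`. -/
def bC : V → V → V → V → F := fun X Y Z W => S.g (S.C X Y Z) W

/-- The action of the curvature operator `R(X,Y)` as a derivation on (0,4)-tensors. -/
def Rdot (X Y : V) (T : V → V → V → V → F) : V → V → V → V → F :=
  fun Z W U P => -(T (S.R X Y Z) W U P) - T Z (S.R X Y W) U P
    - T Z W (S.R X Y U) P - T Z W U (S.R X Y P)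

/-- Horizontal integrability: the (v)h-torsion `R̂(X,Y) = R(X,Y)η̄` vanishes. -/
def HorizontallyIntegrable : Prop := ∀ X Y, S.R X Y S.eta = 0

/-- Recurrent: `∇ʰR = A ⊗ R` with `A` a non-zero 1-form. -/
def Recurrent (A : V → F) : Prop :=
  A ≠ 0 ∧ ∀ X Z W U, S.Dh3 S.R X Z W U = A X • S.R Z W U

/-- 2-recurrent: `∇ʰ∇ʰR = α ⊗ R` with `α` a non-zero 2-form. -/
def TwoRecurrent (α : V → V → F) : Prop :=
  α ≠ 0 ∧ ∀ X Y Z W U, S.Dh3b (S.Dh3 S.R) X Y Z W U = α X Y • S.R Z W U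

/-- Generalized recurrent: `∇ʰR = A ⊗ R + B ⊗ G`, `A, B` non-zero 1-forms. -/
def GenRecurrent (A B : V → F) : Prop :=
  A ≠ 0 ∧ B ≠ 0 ∧ ∀ X Z W U, S.Dh3 S.R X Z W U = A X • S.R Z W U + B X • S.G Z W U

/-- Generalized 2-recurrent: `∇ʰ∇ʰR = α ⊗ R + μ ⊗ G`, `α, μ` non-zero 2-forms. -/
def Gen2Recurrent (α μ : V → V → F) : Prop :=
  α ≠ 0 ∧ μ ≠ 0 ∧ ∀ X Y Z W U,
    S.Dh3b (S.Dh3 S.R) X Y Z W U = α X Y • S.R Z W U + μ X Y • S.G Z W U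

/-- Ricci recurrent: `∇ʰRic = A ⊗ Ric`, `A` a non-zero 1-form. -/
def RicciRecurrent (A : V → F) : Prop :=
  A ≠ 0 ∧ ∀ X Y Z, S.Dh2 S.Ric X Y Z = A X * S.Ric Y Z

/-- 2-Ricci recurrent: `∇ʰ∇ʰRic = α ⊗ Ric`, `α` a non-zero 2-form. -/
def TwoRicciRecurrent (α : V → V → F) : Prop :=
  α ≠ 0 ∧ ∀ X Y Z W, S.Dh2b (S.Dh2 S.Ric) X Y Z W = α X Y * S.Ric Z W

/-- Generalized Ricci recurrent: `∇ʰRic = A ⊗ Ric + B ⊗ g`. -/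
def GenRicciRecurrent (A B : V → F) : Prop :=
  A ≠ 0 ∧ B ≠ 0 ∧ ∀ X Y Z, S.Dh2 S.Ric X Y Z = A X * S.Ric Y Z + B X * S.g Y Z

/-- Concircularly recurrent: `∇ʰC = A ⊗ C`, `A` a non-zero 1-form. -/
def ConcRecurrent (A : V → F) : Prop :=
  A ≠ 0 ∧ ∀ X Z W U, S.Dh3 S.C X Z W U = A X • S.C Z W U

/-- 2-concircularly recurrent: `∇ʰ∇ʰC = α ⊗ C`, `α` a non-zero 2-form. -/
def TwoConcRecurrent (α : V → V → F) : Prop :=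
  α ≠ 0 ∧ ∀ X Y Z W U, S.Dh3b (S.Dh3 S.C) X Y Z W U = α X Y • S.C Z W U

/-- Generalized concircularly recurrent: `∇ʰC = A ⊗ C + B ⊗ G`. -/
def GenConcRecurrent (A B : V → F) : Prop :=
  A ≠ 0 ∧ B ≠ 0 ∧ ∀ X Z W U, S.Dh3 S.C X Z W U = A X • S.C Z W U + B X • S.G Z W U

/-- Generalized 2-concircularly recurrent: `∇ʰ∇ʰC = α ⊗ C + μ ⊗ G`. -/
def Gen2ConcRecurrent (α μ : V → V → F) : Prop :=
  α ≠ 0 ∧ μ ≠ 0 ∧ ∀ X Y Z W U,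
    S.Dh3b (S.Dh3 S.C) X Y Z W U = α X Y • S.C Z W U + μ X Y • S.G Z W U

end FinslerRec

/- The derivative of `R` is contracted twice, using `tr13 G = (n-1) g` and `tr02 g = n`, to get the
formula for `∇ʰr`. Since `∇ʰG = 0`, the same double contraction applied to `f • G` shows that
`∇ʰ` commutes with multiplication by the constant `n(n-1)`, so `f = r / (n(n-1))` satisfies
`∇ʰf = f A + B`. Writing `R = C + f • G`, the `B ⊗ G` term of `∇ʰR` is exactly absorbed by
`∇ʰf ⊗ G`, leaving `∇ʰC = A ⊗ C`. -/

theorem Nat.cast_mul_sub_one {R : Type*} [Ring R] (n : ℕ) :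
    ((n * (n - 1) : ℕ) : R) = n * ((n : R) - 1) := by
  cases n <;> simp

namespace FinslerRec

variable {F : Type*} {V : Type*} [CommRing F] [AddCommGroup V] [Module F V] (S : FinslerRec F V)

theorem invN_mul_dim : S.invN * ((S.n : F) * ((S.n : F) - 1)) = 1 := by
  rw [← Nat.cast_mul_sub_one]
  exact S.invN_mul

theorem tr13_G_eq (Y Z : V) : S.tr13 S.G Y Z = ((S.n : F) - 1) * S.g Y Z :=
  S.tr13_G Y Z

theorem Dh3_smul_G (f : F) (X : V) :
    S.Dh3 (fun x y z => f • S.G x y z) X = fun a b c => S.Dh0 f X • S.G a b c := by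
  funext a b c
  rw [S.Dh3_smulF, show S.Dh3 S.G X a b c = 0 from S.DhG_eq_zero X a b c, smul_zero, add_zero]

theorem tr13_smul_R_add_smul_G (a b : F) (Y Z : V) :
    S.tr13 (fun x y z => a • S.R x y z + b • S.G x y z) Y Z
      = a * S.Ric Y Z + b * ((S.n : F) - 1) * S.g Y Z := by
  rw [S.tr13_add, S.tr13_smul, S.tr13_smul, S.tr13_R, S.tr13_G_eq, mul_assoc]

theorem tr13_smul_G (f : F) :
    S.tr13 (fun x y z => f • S.G x y z) = fun Y Z => f * ((S.n : F) - 1) * S.g Y Z := by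
  funext Y Z
  rw [S.tr13_smul, S.tr13_G_eq, mul_assoc]

theorem tr02_smul_g (f : F) : S.tr02 (fun a b => f * S.g a b) = f * S.n := by
  rw [S.tr02_smul, S.tr02_g]

theorem tr02_tr13_smul_G (f : F) :
    S.tr02 (S.tr13 (fun x y z => f • S.G x y z)) = f * ((S.n : F) - 1) * S.n := by
  rw [S.tr13_smul_G, S.tr02_smul_g]

theorem Dh0_mul_sub_one_mul (f : F) (X : V) :
    S.Dh0 (f * ((S.n : F) - 1) * S.n) X = S.Dh0 f X * ((S.n : F) - 1) * S.n := by
  rw [← S.tr02_tr13_smul_G, ← S.tr02_Dh]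
  simp only [← S.tr13_Dh]
  rw [S.Dh3_smul_G, S.tr02_tr13_smul_G]

theorem Dh0_invN_mul (f : F) (X : V) : S.Dh0 (S.invN * f) X = S.invN * S.Dh0 f X := by
  have hdim := S.invN_mul_dim
  have hf : f = S.invN * f * ((S.n : F) - 1) * S.n := by linear_combination (-f) * hdim
  conv_rhs => rw [hf, S.Dh0_mul_sub_one_mul]
  linear_combination (-S.Dh0 (S.invN * f) X) * hdim

section GenRecurrent

variable {A B : V → F}
  (hR : ∀ X Z W U, S.Dh3 S.R X Z W U = A X • S.R Z W U + B X • S.G Z W U)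
include hR

theorem Dh2_Ric_of_Dh3_R (X Y Z : V) :
    S.Dh2 S.Ric X Y Z = A X * S.Ric Y Z + B X * ((S.n : F) - 1) * S.g Y Z := by
  rw [← S.tr13_smul_R_add_smul_G, ← S.tr13_R, ← S.tr13_Dh, funext₃ (hR X)]

theorem Dh0_r_of_Dh3_R (X : V) :
    S.Dh0 S.r X = S.r * A X + ((S.n * (S.n - 1) : ℕ) : F) * B X := by
  rw [← S.tr02_Ric, ← S.tr02_Dh]
  simp only [S.Dh2_Ric_of_Dh3_R hR, S.tr02_add, S.tr02_smul, S.tr02_Ric, S.tr02_g,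
    Nat.cast_mul_sub_one]
  ring

theorem Dh0_invN_mul_r_of_Dh3_R (X : V) :
    S.Dh0 (S.invN * S.r) X = S.invN * S.r * A X + B X := by
  rw [S.Dh0_invN_mul, S.Dh0_r_of_Dh3_R hR, Nat.cast_mul_sub_one]
  linear_combination B X * S.invN_mul_dim

theorem Dh3_C_of_Dh3_R (X Z W U : V) : S.Dh3 S.C X Z W U = A X • S.C Z W U := by
  have hsplit : S.R = fun x y z => S.C x y z + (S.invN * S.r) • S.G x y z := by
    funext x y z
    simp only [C, sub_add_cancel]
  have hDR := hR X Z W U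
  rw [hsplit, S.Dh3_add, S.Dh3_smul_G, S.Dh0_invN_mul_r_of_Dh3_R hR, ← hsplit] at hDR
  rw [eq_sub_of_add_eq hDR]
  simp only [C]
  module

end GenRecurrent

end FinslerRec

theorem genRecurrent_is_concRecurrent_general
    {F : Type*} {V : Type*} [CommRing F] [AddCommGroup V] [Module F V]
    (S : FinslerRec F V) (A B : V → F)
    (hrec : S.GenRecurrent A B) :
    (∀ X, S.Dh0 S.r X = S.r * A X + ((S.n * (S.n - 1) : ℕ) : F) * B X) ∧
    S.ConcRecurrent A := by
  obtain ⟨hA, -, hR⟩ := hrec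
  exact ⟨S.Dh0_r_of_Dh3_R hR, hA, S.Dh3_C_of_Dh3_R hR⟩

/-- Theorem 5.1(b): on a generalized recurrent Finsler manifold of dimension
`n ≥ 3` with recurrence forms `A, B`, double contraction gives
`∇ʰr = rA + n(n−1)B`, and the manifold is concircularly recurrent with
recurrence form `A`. -/
theorem genRecurrent_is_concRecurrent
    {F : Type*} {V : Type*} [CommRing F] [AddCommGroup V] [Module F V]
    (S : FinslerRec F V) (hn : 3 ≤ S.n) (A B : V → F)
    (hrec : S.GenRecurrent A B) :
    (∀ X, S.Dh0 S.r X = S.r * A X + ((S.n * (S.n - 1) : ℕ) : F) * B X) ∧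
    S.ConcRecurrent A :=
  genRecurrent_is_concRecurrent_general S A B hrec
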